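/- arXiv:2405.01700 — 3 statements merged into one kernel-verified Lean document; each statement's English description precedes it below -/
import Mathlib

section
/- Let S be a numerical semigroup of multiplicity m with semigroup ring R over a field k. The infinite Apéry resolution F_• of k over R is minimal, i.e., ∂(F_d) ⊆ 𝔪·F_{d−1} for every d ≥ 1, if and only if S has maximal embedding dimension. (Theorem 3.2, second assertion.) -/
open Polynomial CategoryTheory

set_option synthInstance.maxHeartbeats 1000000
set_option maxHeartbeats 1600000


/-- A numerical semigroup: a cofinite additive submonoid of `ℕ`. -/
structure NumericalSemigroup where
  carrier : AddSubmonoid ℕ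
  cofinite : ((carrier : Set ℕ))ᶜ.Finite

namespace NumericalSemigroup

/-- The multiplicity `m = min (S \ {0})`. -/
noncomputable def mult (S : NumericalSemigroup) : ℕ :=
  sInf {n | n ∈ S.carrier ∧ n ≠ 0}

/-- `apery S i` is the smallest element of `S` congruent to `i` mod `m`. -/
noncomputable def apery (S : NumericalSemigroup) (i : ℕ) : ℕ :=
  sInf {n | n ∈ S.carrier ∧ n % S.mult = i % S.mult}

lemma exists_bound (S : NumericalSemigroup) : ∃ N, ∀ n, N ≤ n → n ∈ S.carrier := by
  obtain ⟨C, hC⟩ := S.cofinite.bddAbove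
  refine ⟨C + 1, fun n hn => ?_⟩
  by_contra h
  exact absurd (hC h) (by omega)

lemma mult_spec (S : NumericalSemigroup) : S.mult ∈ S.carrier ∧ S.mult ≠ 0 := by
  obtain ⟨N, hN⟩ := S.exists_bound
  have h : {n | n ∈ S.carrier ∧ n ≠ 0}.Nonempty := ⟨N + 1, hN _ (by omega), by omega⟩
  exact Nat.sInf_mem h

lemma apery_spec (S : NumericalSemigroup) (i : ℕ) :
    S.apery i ∈ S.carrier ∧ S.apery i % S.mult = i % S.mult := by
  obtain ⟨N, hN⟩ := S.exists_bound
  have hm : S.mult ≠ 0 := S.mult_spec.2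
  have h : {n | n ∈ S.carrier ∧ n % S.mult = i % S.mult}.Nonempty := by
    refine ⟨i % S.mult + S.mult * (N + 1), hN _ ?_, ?_⟩
    · have h1 : 1 ≤ S.mult := Nat.one_le_iff_ne_zero.mpr hm
      have : N + 1 ≤ S.mult * (N + 1) := Nat.le_mul_of_pos_left _ h1
      omega
    · simp [Nat.add_mul_mod_self_left, Nat.mod_mod_of_dvd]
  exact Nat.sInf_mem h

/-- The Apéry numbers `a_i` for `i ∈ ℤ/m`, with the convention `a_0 = m`. -/
noncomputable def a (S : NumericalSemigroup) (i : ZMod S.mult) : ℕ :=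
  if i = 0 then S.mult else S.apery i.val

lemma a_mem (S : NumericalSemigroup) (i : ZMod S.mult) : S.a i ∈ S.carrier := by
  unfold a; split
  · exact S.mult_spec.1
  · exact (S.apery_spec _).1

/-- The quantities `b_{ij} = (a_i + a_j - a_{i+j})/m`. -/
noncomputable def b (S : NumericalSemigroup) (i j : ZMod S.mult) : ℕ :=
  (S.a i + S.a j - S.a (i + j)) / S.mult

/-- The semigroup algebra `k[S]`, realized as the subalgebra of `k[t]`
spanned by the monomials `t^s` with `s ∈ S`. -/
def toRing (k : Type) [Field k] (S : NumericalSemigroup) : Subalgebra k (Polynomial k) where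
  carrier := {p | ∀ n, p.coeff n ≠ 0 → n ∈ S.carrier}
  add_mem' := by
    intro p q hp hq n h
    rw [Set.mem_setOf_eq] at hp hq
    by_contra hn
    have h1 : (p : Polynomial k).coeff n = 0 := by by_contra hc; exact hn (hp n hc)
    have h2 : (q : Polynomial k).coeff n = 0 := by by_contra hc; exact hn (hq n hc)
    simp [coeff_add, h1, h2] at h
  mul_mem' := by
    intro p q hp hq n h
    rw [Set.mem_setOf_eq] at hp hq
    rw [Polynomial.coeff_mul] at h
    obtain ⟨⟨u, v⟩, huv, hne⟩ := Finset.exists_ne_zero_of_sum_ne_zero h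
    obtain ⟨h1, h2⟩ := mul_ne_zero_iff.mp hne
    have : u + v = n := Finset.HasAntidiagonal.mem_antidiagonal.mp huv
    exact this ▸ S.carrier.add_mem (hp u h1) (hq v h2)
  algebraMap_mem' := by
    intro r n h
    have : n = 0 := by
      by_contra hn
      simp [Polynomial.coeff_C, hn] at h
    exact this ▸ S.carrier.zero_mem

variable (k : Type) [Field k] (S : NumericalSemigroup)

/-- The monomial `x_j = t^{a_j}` as an element of `k[S]`. -/
noncomputable def xv (j : ZMod S.mult) : S.toRing k :=
  ⟨X ^ S.a j, by
    intro n h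
    have : n = S.a j := by
      by_contra hn
      simp [coeff_X_pow, hn] at h
    exact this ▸ S.a_mem j⟩

/-- The augmentation `k[S] → k = k[S]/𝔪`, given by the constant coefficient. -/
noncomputable def aug : S.toRing k →+* k :=
  (Polynomial.constantCoeff).comp ((S.toRing k).val.toRingHom)

/-- The maximal ideal `𝔪` of `k[S]`. -/
noncomputable def mIdeal : Ideal (S.toRing k) :=
  RingHom.ker (S.aug k)

/-- The residue field `k = k[S]/𝔪` as a module over `k[S]`. -/
def ResMod (_S : NumericalSemigroup) : Type := k

noncomputable instance : AddCommGroup (ResMod k S) := inferInstanceAs (AddCommGroup k)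
noncomputable instance : Module (S.toRing k) (ResMod k S) := Module.compHom k (S.aug k)

/-- `dim_k Tor_i^{k[S]}(k, k)` as a cardinal. -/
noncomputable def torDim (i : ℕ) : Cardinal :=
  Module.rank k (RestrictScalars k (S.toRing k)
    (((Tor (ModuleCat (S.toRing k)) i).obj
        (ModuleCat.of (S.toRing k) (ResMod k S))).obj
      (ModuleCat.of (S.toRing k) (ResMod k S))))


/-- Words `w ∈ (ℤ/m)^d` indexing the generators of `F_d`; since `e_w = 0` whenever some
letter past the first is `0`, the basis consists of words whose letters past the first
are all nonzero. -/
def Word (m d : ℕ) : Type := {w : Fin d → ZMod m // ∀ i : Fin d, 0 < (i : ℕ) → w i ≠ 0}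

/-- Remove the last letter of a word: `ŵ`. -/
def trunc {m d : ℕ} (w : Fin (d + 1) → ZMod m) (i : Fin d) : ZMod m := w i.castSucc

/-- `tau i` merges the letters in (0-indexed) positions `i` and `i+1`. -/
def tau {m d : ℕ} (i : Fin d) (w : Fin (d + 1) → ZMod m) (j : Fin d) : ZMod m :=
  if (j : ℕ) < (i : ℕ) then w j.castSucc
  else if j = i then w i.castSucc + w i.succ
  else w j.succ

/-- The basis vector `e_v` of `F_d`, interpreted as `0` if `v` has a zero letter past
the first position. -/
noncomputable def E {d : ℕ} (v : Fin d → ZMod S.mult) : Word S.mult d →₀ S.toRing k :=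
  if h : ∀ i : Fin d, 0 < (i : ℕ) → v i ≠ 0 then Finsupp.single ⟨v, h⟩ 1 else 0

/-- The differential `∂ : F_{d+1} → F_d` of the infinite Apéry complex:
`∂ e_w = x_{w_d} e_{ŵ} + Σ_{i} (-1)^{d-i} y^{b_{w_i w_{i+1}}} e_{τ_i w}`. -/
noncomputable def del (d : ℕ) :
    (Word S.mult (d + 1) →₀ S.toRing k) →ₗ[S.toRing k] (Word S.mult d →₀ S.toRing k) :=
  Finsupp.lift (Word S.mult d →₀ S.toRing k) (S.toRing k) (Word S.mult (d + 1)) fun w =>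
    S.xv k (w.1 (Fin.last d)) • E k S (trunc w.1)
      + ∑ i : Fin d,
          ((-1 : S.toRing k) ^ (d - (i : ℕ)) *
              S.xv k 0 ^ S.b (w.1 i.castSucc) (w.1 i.succ)) •
            E k S (tau i w.1)

/-- The set of minimal generators of `S`: nonzero elements of `S` that are not sums of
two nonzero elements of `S`. -/
def minimalGenerators (T : NumericalSemigroup) : Set ℕ :=
  {n | n ∈ T.carrier ∧ n ≠ 0 ∧
    ¬∃ u ∈ T.carrier, ∃ v ∈ T.carrier, u ≠ 0 ∧ v ≠ 0 ∧ u + v = n}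

/-- `S` has maximal embedding dimension: the number of minimal generators equals the
multiplicity. -/
def IsMED (T : NumericalSemigroup) : Prop :=
  T.minimalGenerators.ncard = T.mult

/-!
Both sides come down to the positivity of every `b_{ij}` with `i, j ≠ 0`.

Each coefficient of `∂ e_w` is either `x_{w_d} ∈ 𝔪` or `±y^{b_{w_i w_{i+1}}}`, which lies
in `𝔪` exactly when the exponent is positive; `b_{0j} = 1` always, and the coefficient of
`e_{(i+j)}` in `∂ e_{(i,j)}` is `-y^{b_{ij}}`.

Every minimal generator of `S` is one of the `m` Apéry elements `a_i`, and `a_i` with `i ≠ 0`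
fails to be one exactly when `a_i = a_j + a_l` with `j, l ≠ 0`, i.e. when `b_{jl} = 0`.
So `S` is MED iff all `a_i` are minimal generators iff all such `b_{jl}` are positive.
-/

lemma mult_ne_zero : S.mult ≠ 0 := S.mult_spec.2

lemma mult_mem : S.mult ∈ S.carrier := S.mult_spec.1

instance : NeZero S.mult := ⟨S.mult_ne_zero⟩

lemma mult_le_of_mem {n : ℕ} (hn : n ∈ S.carrier) (h0 : n ≠ 0) : S.mult ≤ n :=
  Nat.sInf_le ⟨hn, h0⟩

lemma a_zero : S.a 0 = S.mult := if_pos rfl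

lemma cast_a (i : ZMod S.mult) : (S.a i : ZMod S.mult) = i := by
  unfold a
  split_ifs with hi
  · rw [hi, ZMod.natCast_self]
  · exact ((ZMod.natCast_eq_natCast_iff' _ _ _).mpr (S.apery_spec i.val).2).trans
      (ZMod.natCast_zmod_val i)

lemma a_injective : Function.Injective S.a :=
  Function.LeftInverse.injective S.cast_a

lemma a_ne_zero (i : ZMod S.mult) : S.a i ≠ 0 := by
  intro h
  by_cases hi : i = 0
  · exact S.mult_ne_zero (S.a_zero ▸ hi ▸ h)
  · exact hi (by rw [← S.cast_a i, h, Nat.cast_zero])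

lemma mult_le_a (i : ZMod S.mult) : S.mult ≤ S.a i :=
  S.mult_le_of_mem (S.a_mem i) (S.a_ne_zero i)

lemma a_natCast_le {n : ℕ} (hn : n ∈ S.carrier) (h0 : n ≠ 0) : S.a n ≤ n := by
  unfold a
  split_ifs
  · exact S.mult_le_of_mem hn h0
  · exact Nat.sInf_le ⟨hn, by rw [ZMod.val_natCast, Nat.mod_mod]⟩

lemma mult_dvd_sub_a_natCast {n : ℕ} (hn : n ∈ S.carrier) (h0 : n ≠ 0) :
    S.mult ∣ n - S.a n :=
  (Nat.modEq_iff_dvd' (S.a_natCast_le hn h0)).mp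
    ((ZMod.natCast_eq_natCast_iff _ _ _).mp (S.cast_a n))

lemma a_add_mul_mult_mem (i : ZMod S.mult) (t : ℕ) : S.a i + t * S.mult ∈ S.carrier :=
  S.carrier.add_mem (S.a_mem i) (S.carrier.nsmul_mem S.mult_mem t)

lemma natCast_a_add_a (i j : ZMod S.mult) : ((S.a i + S.a j : ℕ) : ZMod S.mult) = i + j := by
  rw [Nat.cast_add, S.cast_a, S.cast_a]

lemma a_add_le (i j : ZMod S.mult) : S.a (i + j) ≤ S.a i + S.a j := by
  simpa only [S.natCast_a_add_a] using
    S.a_natCast_le (S.carrier.add_mem (S.a_mem i) (S.a_mem j)) (by simp [S.a_ne_zero])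

lemma mult_dvd_a_add_a_sub (i j : ZMod S.mult) : S.mult ∣ S.a i + S.a j - S.a (i + j) := by
  simpa only [S.natCast_a_add_a] using
    S.mult_dvd_sub_a_natCast (S.carrier.add_mem (S.a_mem i) (S.a_mem j)) (by simp [S.a_ne_zero])

lemma b_eq_zero_iff (i j : ZMod S.mult) : S.b i j = 0 ↔ S.a i + S.a j = S.a (i + j) := by
  have hle := S.a_add_le i j
  rw [b, Nat.div_eq_zero_iff_lt (Nat.pos_of_ne_zero S.mult_ne_zero)]
  constructor
  · intro hlt
    have := Nat.eq_zero_of_dvd_of_lt (S.mult_dvd_a_add_a_sub i j) hlt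
    omega
  · intro h
    have := S.mult_ne_zero
    omega

lemma b_zero_left (j : ZMod S.mult) : S.b 0 j = 1 := by
  rw [b, zero_add, a_zero, Nat.add_sub_cancel, Nat.div_self (Nat.pos_of_ne_zero S.mult_ne_zero)]

lemma ne_zero_of_b_eq_zero {i j : ZMod S.mult} (hb : S.b i j = 0) :
    i ≠ 0 ∧ j ≠ 0 ∧ i + j ≠ 0 := by
  have h := (S.b_eq_zero_iff i j).mp hb
  have := S.mult_le_a i
  have := S.mult_le_a j
  have := S.mult_ne_zero
  refine ⟨?_, ?_, ?_⟩ <;> rintro h0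
  · rw [h0, zero_add, a_zero] at h; omega
  · rw [h0, add_zero, a_zero] at h; omega
  · rw [h0, a_zero] at h; omega

lemma mult_mem_minimalGenerators : S.mult ∈ S.minimalGenerators := by
  refine ⟨S.mult_mem, S.mult_ne_zero, ?_⟩
  rintro ⟨u, hu, v, hv, hu0, hv0, huv⟩
  have := S.mult_le_of_mem hu hu0
  have := S.mult_le_of_mem hv hv0
  omega

-- An element `n = a_n + t m` with `t > 0` splits as `m + (a_n + (t - 1) m)`.
lemma minimalGenerators_subset_range_a : S.minimalGenerators ⊆ Set.range S.a := by
  rintro n ⟨hn, hn0, hindec⟩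
  refine ⟨n, ?_⟩
  obtain ⟨t, ht⟩ := S.mult_dvd_sub_a_natCast hn hn0
  have hle := S.a_natCast_le hn hn0
  rcases t with _ | t
  · omega
  · have hsplit : S.mult + (S.a n + t * S.mult) = n := by
      rw [Nat.mul_succ] at ht
      rw [Nat.mul_comm t]
      omega
    have hpos : S.a n + t * S.mult ≠ 0 := by
      have := S.a_ne_zero n
      omega
    exact absurd
      ⟨S.mult, S.mult_mem, _, S.a_add_mul_mult_mem n t, S.mult_ne_zero, hpos, hsplit⟩ hindec

lemma a_mem_minimalGenerators_iff {i : ZMod S.mult} (hi : i ≠ 0) :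
    S.a i ∈ S.minimalGenerators ↔ ∀ j l : ZMod S.mult, j + l = i → 0 < S.b j l := by
  simp only [minimalGenerators, Set.mem_ofPred_eq, S.a_mem i, ne_eq, S.a_ne_zero i,
    not_false_eq_true, true_and, Nat.pos_iff_ne_zero, not_exists, not_and]
  constructor
  · rintro hindec j l rfl hb
    exact hindec _ (S.a_mem j) _ (S.a_mem l) (S.a_ne_zero j) (S.a_ne_zero l)
      ((S.b_eq_zero_iff j l).mp hb)
  · rintro hb u hu v hv hu0 hv0 huv
    have hsum : ((u : ZMod S.mult) + v) = i := by rw [← Nat.cast_add, huv, S.cast_a]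
    have := S.a_natCast_le hu hu0
    have := S.a_natCast_le hv hv0
    have := S.a_add_le u v
    refine hb u v hsum ((S.b_eq_zero_iff _ _).mpr ?_)
    rw [hsum] at *
    omega

lemma isMED_iff_range_a_subset : S.IsMED ↔ Set.range S.a ⊆ S.minimalGenerators := by
  have hcard : (Set.range S.a).ncard = S.mult := by
    rw [Set.ncard_range_of_injective S.a_injective, Nat.card_zmod]
  refine ⟨fun hmed => ?_, fun hsub => ?_⟩
  · refine (Set.eq_of_subset_of_ncard_le S.minimalGenerators_subset_range_a ?_
      (Set.finite_range _)).symm.subset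
    rw [hcard, ← hmed]
  · rw [IsMED, S.minimalGenerators_subset_range_a.antisymm hsub, hcard]

lemma isMED_iff_b_pos : S.IsMED ↔ ∀ i j : ZMod S.mult, i ≠ 0 → j ≠ 0 → 0 < S.b i j := by
  rw [isMED_iff_range_a_subset, Set.range_subset_iff]
  refine ⟨fun h i j _ _ => ?_, fun h i => ?_⟩
  · refine Nat.pos_of_ne_zero fun hb => ?_
    have hsum := (S.ne_zero_of_b_eq_zero hb).2.2
    exact ((S.a_mem_minimalGenerators_iff hsum).mp (h _) i j rfl).ne' hb
  · by_cases hi : i = 0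
    · rw [hi, a_zero]
      exact S.mult_mem_minimalGenerators
    · refine (S.a_mem_minimalGenerators_iff hi).mpr fun j l _ => Nat.pos_of_ne_zero fun hb => ?_
      obtain ⟨hj, hl, -⟩ := S.ne_zero_of_b_eq_zero hb
      exact (h j l hj hl).ne' hb

lemma _root_.Finsupp.apply_mem_of_mem_ideal_smul_top {R σ : Type*} [CommRing R]
    {I : Ideal R} {f : σ →₀ R} (hf : f ∈ I • (⊤ : Submodule R (σ →₀ R))) (w : σ) :
    f w ∈ I := by
  refine Submodule.smul_induction_on hf (fun r hr g _ => I.mul_mem_right _ hr) ?_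
  exact fun g h hg hh => I.add_mem hg hh

lemma xv_mem_mIdeal (j : ZMod S.mult) : S.xv k j ∈ S.mIdeal k := by
  change Polynomial.coeff ((X : k[X]) ^ S.a j) 0 = 0
  rw [coeff_X_pow, if_neg (S.a_ne_zero j).symm]

lemma neg_one_notMem_mIdeal : (-1 : S.toRing k) ∉ S.mIdeal k := by
  rw [Ideal.neg_mem_iff, ← Ideal.eq_top_iff_one]
  exact RingHom.ker_ne_top _

lemma del_single_one {d : ℕ} (w : Word S.mult (d + 1)) :
    S.del k d (Finsupp.single w 1) =
      S.xv k (w.1 (Fin.last d)) • E k S (trunc w.1)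
        + ∑ i : Fin d,
            ((-1 : S.toRing k) ^ (d - (i : ℕ)) *
                S.xv k 0 ^ S.b (w.1 i.castSucc) (w.1 i.succ)) •
              E k S (tau i w.1) := by
  rw [del, Finsupp.lift_apply]
  refine (Finsupp.sum_single_index ?_).trans (one_smul _ _)
  exact zero_smul _ _

lemma E_apply {d : ℕ} (v : Fin d → ZMod S.mult) (z : Word S.mult d) :
    E k S v z = if v = z.1 then 1 else 0 := by
  unfold E
  split_ifs with hv hvz hvz
  · exact (Subtype.ext hvz : (⟨v, hv⟩ : Word S.mult d) = z) ▸ Finsupp.single_eq_same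
  · exact Finsupp.single_eq_of_ne' fun h => hvz (congrArg Subtype.val h)
  · exact absurd (hvz ▸ z.2) hv
  · rfl

lemma del_one_single_one_apply (w : Word S.mult 2) (z : Word S.mult 1)
    (hz : z.1 0 = w.1 0 + w.1 1) :
    S.del k 1 (Finsupp.single w 1) z = -S.xv k 0 ^ S.b (w.1 0) (w.1 1) := by
  have htrunc : trunc w.1 ≠ z.1 := fun h => w.2 1 Nat.one_pos <| by
    simpa [hz, trunc] using congrFun h 0
  have htau : tau 0 w.1 = z.1 := funext fun p => by
    rw [Subsingleton.elim p 0, hz]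
    simp [tau]
  rw [del_single_one, Finsupp.add_apply, Fin.sum_univ_one, Finsupp.smul_apply, Finsupp.smul_apply,
    E_apply, E_apply, if_neg htrunc, if_pos htau]
  simp only [smul_eq_mul, mul_one, Fin.castSucc_zero, Fin.succ_zero_eq_one, Fin.val_zero,
    Nat.sub_zero, pow_one]
  ring

lemma b_pos_of_range_del_one_le
    (h : LinearMap.range (S.del k 1) ≤
      S.mIdeal k • (⊤ : Submodule _ (Word S.mult 1 →₀ S.toRing k)))
    (i : ZMod S.mult) {j : ZMod S.mult} (hj : j ≠ 0) : 0 < S.b i j := by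
  let w : Word S.mult 2 := ⟨![i, j], fun p hp => by fin_cases p <;> simp_all⟩
  let z : Word S.mult 1 := ⟨![i + j], fun p hp => absurd p.2 (by omega)⟩
  have hcoeff := Finsupp.apply_mem_of_mem_ideal_smul_top
    (h (LinearMap.mem_range_self _ (Finsupp.single w 1))) z
  rw [S.del_one_single_one_apply k w z rfl] at hcoeff
  refine Nat.pos_of_ne_zero fun hb => S.neg_one_notMem_mIdeal k ?_
  simpa [w, hb] using hcoeff

lemma range_del_le_of_b_pos (hb : ∀ i j : ZMod S.mult, i ≠ 0 → j ≠ 0 → 0 < S.b i j)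
    (d : ℕ) :
    LinearMap.range (S.del k d) ≤
      S.mIdeal k • (⊤ : Submodule _ (Word S.mult d →₀ S.toRing k)) := by
  rintro _ ⟨f, rfl⟩
  induction f using Finsupp.induction_linear with
  | zero => rw [map_zero]; exact zero_mem _
  | add f g hf hg => rw [map_add]; exact add_mem hf hg
  | single w c =>
    rw [← Finsupp.smul_single_one, map_smul, del_single_one]
    refine Submodule.smul_mem _ c (add_mem ?_ (sum_mem fun p _ => ?_))
    · exact Submodule.smul_mem_smul (S.xv_mem_mIdeal k _) Submodule.mem_top
    · have hexp : 0 < S.b (w.1 p.castSucc) (w.1 p.succ) := by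
        by_cases hp : w.1 p.castSucc = 0
        · rw [hp, b_zero_left]
          exact Nat.one_pos
        · exact hb _ _ hp (w.2 p.succ p.succ_pos)
      refine Submodule.smul_mem_smul (Ideal.mul_mem_left _ _ ?_) Submodule.mem_top
      exact Ideal.pow_mem_of_mem _ (S.xv_mem_mIdeal k 0) _ hexp

/-- **Theorem 3.2 (second assertion).** The infinite Apéry resolution of `k` over
`R = k[S]` is minimal, i.e. `∂(F_d) ⊆ 𝔪·F_{d-1}` for every `d ≥ 1`, if and only if `S`
has maximal embedding dimension. -/
theorem infinite_apery_resolution_minimal_iff_MED (k : Type) [Field k]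
    (S : NumericalSemigroup) :
    (∀ d : ℕ, LinearMap.range (S.del k d) ≤
      S.mIdeal k • (⊤ : Submodule (S.toRing k) (Word S.mult d →₀ S.toRing k))) ↔
    S.IsMED := by
  rw [S.isMED_iff_b_pos]
  exact ⟨fun h i j _ hj => S.b_pos_of_range_del_one_le k (h 1) i hj, S.range_del_le_of_b_pos k⟩

end NumericalSemigroup
end

section
/- If S is a numerical semigroup of multiplicity m with maximal embedding dimension, and R = k[S] is its semigroup ring over a field k, then dim_k Tor_0^R(k, k) = 1 and dim_k Tor_d^R(k, k) = m(m−1)^{d−1} for every d ≥ 1; equivalently, P_k^R(z) = (1 + z)/(1 − (m−1)z) as formal power series. (Consequence of Theorem 3.2, used in the proof of Corollary 3.7.) -/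
open Polynomial CategoryTheory

set_option synthInstance.maxHeartbeats 1000000
set_option maxHeartbeats 1600000


namespace NumericalSemigroup

variable (k : Type) [Field k] (S : NumericalSemigroup)

/-!
Under maximal embedding dimension a sum `u + v` of two nonzero elements of `S` is never an Apéry
element, so `u + v - m ∈ S`. In `R = k[S]` put `x_j = t^{a_j}` and `y_{ij} = t^{a_i + a_j - m}`;
then `x₀ y_{ij} = x_i x_j`, and comparing coefficients of `t^{a_i}` shows that every syzygy `r` of
`(x_j)_j` has `r_i ∈ 𝔪` for `i ≠ 0`. Writing `r_i = ∑_j x_j s_{ij}` and cancelling `x₀` gives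
`r_0 = -∑_{i,j} y_{ij} s_{ij}`: the syzygy module of `(x_j)_j` is the image of `R^{(m-1) m}` under
`s ↦ r`. Iterating yields a free resolution of `k` with `F_0 = R` and `F_{d+1} = R^{m (m-1)^d}`.
All entries of its differentials lie in `𝔪`, so the resolution is minimal and
`dim_k Tor_d(k, k) = rank F_d`.
-/

def _root_.LinearEquiv.restrictScalarsCongr {R A M N : Type*} [CommSemiring R] [Semiring A]
    [Algebra R A] [AddCommMonoid M] [Module A M] [AddCommMonoid N] [Module A N]
    (e : M ≃ₗ[A] N) : RestrictScalars R A M ≃ₗ[R] RestrictScalars R A N where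
  __ := (RestrictScalars.addEquiv R A M).trans
    (e.toAddEquiv.trans (RestrictScalars.addEquiv R A N).symm)
  map_smul' c x := by
    apply (RestrictScalars.addEquiv R A N).injective
    simp [RestrictScalars.addEquiv_map_smul]

instance inst_s6 : NeZero S.mult := ⟨S.mult_spec.2⟩

lemma mult_le {s : ℕ} (hs : s ∈ S.carrier) (h0 : s ≠ 0) : S.mult ≤ s :=
  Nat.sInf_le ⟨hs, h0⟩

lemma mem_of_mult_dvd {s : ℕ} (h : S.mult ∣ s) : s ∈ S.carrier := by
  obtain ⟨c, rfl⟩ := h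
  simpa [mul_comm] using S.carrier.nsmul_mem S.mult_spec.1 c

lemma a_of_ne_zero {i : ZMod S.mult} (hi : i ≠ 0) : S.a i = S.apery i.val := if_neg hi

lemma a_mod (i : ZMod S.mult) : S.a i % S.mult = i.val := by
  by_cases hi : i = 0
  · simp [hi, a_zero]
  · rw [a_of_ne_zero S hi, (S.apery_spec i.val).2, Nat.mod_eq_of_lt (ZMod.val_lt i)]

lemma a_le {i : ZMod S.mult} (hi : i ≠ 0) {s : ℕ} (hs : s ∈ S.carrier)
    (h : s % S.mult = i.val) : S.a i ≤ s := by
  rw [a_of_ne_zero S hi]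
  exact Nat.sInf_le ⟨hs, by rw [h, Nat.mod_eq_of_lt (ZMod.val_lt i)]⟩

lemma a_natCast_le_s6 {s : ℕ} (hs : s ∈ S.carrier) (h0 : s ≠ 0) :
    S.a (s : ZMod S.mult) ≤ s := by
  by_cases hi : (s : ZMod S.mult) = 0
  · rw [hi, a_zero]; exact S.mult_le hs h0
  · exact S.a_le hi hs (by rw [ZMod.val_natCast])

lemma mult_dvd_sub_a {s : ℕ} (hs : s ∈ S.carrier) (h0 : s ≠ 0) :
    S.mult ∣ s - S.a (s : ZMod S.mult) :=
  (Nat.modEq_iff_dvd' (S.a_natCast_le_s6 hs h0)).mp (by rw [Nat.ModEq, S.a_mod, ZMod.val_natCast])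

lemma a_sub_mult_notMem {i : ZMod S.mult} (hi : i ≠ 0) : S.a i - S.mult ∉ S.carrier := by
  intro hmem
  have hm := S.mult_le_a i
  have hmod : (S.a i - S.mult) % S.mult = i.val := by
    rw [← Nat.mod_eq_sub_mod hm, S.a_mod]
  have := S.a_le hi hmem hmod
  have := Nat.pos_of_ne_zero S.mult_spec.2
  omega

lemma ncard_range_a : (Set.range S.a).ncard = S.mult := by
  rw [← Set.image_univ, Set.ncard_image_of_injective _ S.a_injective, Set.ncard_univ,
    Nat.card_zmod]

lemma minimalGenerators_eq_range_a (hmed : S.IsMED) : S.minimalGenerators = Set.range S.a :=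
  Set.eq_of_subset_of_ncard_le S.minimalGenerators_subset_range_a
    (by rw [S.ncard_range_a, hmed]) (Set.finite_range _)

lemma add_sub_mult_mem (hmed : S.IsMED) {u v : ℕ} (hu : u ∈ S.carrier) (hv : v ∈ S.carrier)
    (hu0 : u ≠ 0) (hv0 : v ≠ 0) : u + v - S.mult ∈ S.carrier := by
  have huv : u + v ∈ S.carrier := S.carrier.add_mem hu hv
  set j : ZMod S.mult := ((u + v : ℕ) : ZMod S.mult)
  have hdvd : S.mult ∣ u + v - S.a j := S.mult_dvd_sub_a huv (by omega)
  -- under MED every Apéry element is a minimal generator, so it is not the sum `u + v`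
  have hlt : S.a j < u + v := by
    refine (S.a_natCast_le_s6 huv (by omega)).lt_of_ne fun h => ?_
    have hmin : S.a j ∈ S.minimalGenerators := by
      rw [S.minimalGenerators_eq_range_a hmed]; exact ⟨j, rfl⟩
    exact hmin.2.2 ⟨u, hu, v, hv, hu0, hv0, h.symm⟩
  have hm : S.mult ≤ u + v - S.a j := Nat.le_of_dvd (by omega) hdvd
  have hsplit : u + v - S.mult = S.a j + (u + v - S.a j - S.mult) := by omega
  rw [hsplit]
  exact S.carrier.add_mem (S.a_mem j) (S.mem_of_mult_dvd (Nat.dvd_sub hdvd dvd_rfl))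

lemma X_pow_mem_toRing {n : ℕ} (hn : n ∈ S.carrier) : (X ^ n : k[X]) ∈ S.toRing k := by
  intro i hi
  rw [coeff_X_pow] at hi
  split_ifs at hi with h
  · exact h ▸ hn
  · exact absurd rfl hi

lemma aug_apply (p : S.toRing k) : S.aug k p = (p : k[X]).coeff 0 := rfl

lemma aug_algebraMap (c : k) : S.aug k (algebraMap k (S.toRing k) c) = c := by
  simp [aug_apply]

lemma coe_xv (j : ZMod S.mult) : (S.xv k j : k[X]) = X ^ S.a j := rfl

lemma aug_xv (j : ZMod S.mult) : S.aug k (S.xv k j) = 0 := by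
  rw [aug_apply, coe_xv, coeff_X_pow, if_neg (S.a_ne_zero j).symm]

lemma xv_ne_zero (j : ZMod S.mult) : S.xv k j ≠ 0 := fun h => by
  simpa [coe_xv] using congrArg Subtype.val h

lemma a_add_a_sub_mult_mem (hmed : S.IsMED) (i j : ZMod S.mult) :
    S.a i + S.a j - S.mult ∈ S.carrier := by
  by_cases hi : i = 0
  · simpa [hi, a_zero] using S.a_mem j
  by_cases hj : j = 0
  · simpa [hj, a_zero] using S.a_mem i
  exact S.add_sub_mult_mem hmed (S.a_mem i) (S.a_mem j) (S.a_ne_zero i) (S.a_ne_zero j)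

noncomputable def yv (hmed : S.IsMED) (i j : ZMod S.mult) : S.toRing k :=
  ⟨X ^ (S.a i + S.a j - S.mult), S.X_pow_mem_toRing k (S.a_add_a_sub_mult_mem hmed i j)⟩

section

variable {S} (hmed : S.IsMED)

lemma coe_yv (i j : ZMod S.mult) : (S.yv k hmed i j : k[X]) = X ^ (S.a i + S.a j - S.mult) :=
  rfl

lemma aug_yv (i j : ZMod S.mult) : S.aug k (S.yv k hmed i j) = 0 := by
  have := S.mult_le_a i
  have := S.mult_le_a j
  have := Nat.pos_of_ne_zero S.mult_spec.2
  rw [aug_apply, coe_yv, coeff_X_pow, if_neg (by omega)]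

lemma xv_zero_mul_yv (i j : ZMod S.mult) :
    S.xv k 0 * S.yv k hmed i j = S.xv k i * S.xv k j := by
  have := S.mult_le_a i
  apply Subtype.ext
  simp only [MulMemClass.coe_mul, coe_xv, coe_yv, ← pow_add, a_zero]
  congr 1
  omega

lemma yv_mul_yv (i i' j : ZMod S.mult) :
    S.yv k hmed i 0 * S.yv k hmed i' j = S.yv k hmed i i' * S.xv k j := by
  have := S.mult_le_a i'
  have := S.mult_le_a j
  apply Subtype.ext
  simp only [MulMemClass.coe_mul, coe_xv, coe_yv, ← pow_add, a_zero]
  congr 1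
  omega

end

lemma exists_eq_sum_xv_mul {p : S.toRing k} (hp : S.aug k p = 0) :
    ∃ q : ZMod S.mult → S.toRing k, p = ∑ j, S.xv k j * q j := by
  classical
  have hsupp : ∀ n ∈ (p : k[X]).support, n ∈ S.carrier ∧ n ≠ 0 := fun n hn =>
    ⟨p.2 n (mem_support_iff.mp hn), by rintro rfl; exact mem_support_iff.mp hn hp⟩
  let q (j : ZMod S.mult) : k[X] :=
    ∑ n ∈ (p : k[X]).support.filter (fun n : ℕ => (n : ZMod S.mult) = j),
      C ((p : k[X]).coeff n) * X ^ (n - S.a j)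
  have hq (j : ZMod S.mult) : q j ∈ S.toRing k := by
    refine Subalgebra.sum_mem _ fun n hn => ?_
    obtain ⟨hn', rfl⟩ := Finset.mem_filter.mp hn
    exact Subalgebra.mul_mem _ (Subalgebra.algebraMap_mem _ _) (S.X_pow_mem_toRing k
      (S.mem_of_mult_dvd (S.mult_dvd_sub_a (hsupp n hn').1 (hsupp n hn').2)))
  refine ⟨fun j => ⟨q j, hq j⟩, Subtype.ext ?_⟩
  simp only [AddSubmonoidClass.coe_finsetSum, MulMemClass.coe_mul, coe_xv, q, Finset.mul_sum]
  conv_lhs => rw [(p : k[X]).as_sum_support_C_mul_X_pow,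
    ← Finset.sum_fiberwise _ (fun n : ℕ => (n : ZMod S.mult))]
  refine Finset.sum_congr rfl fun j _ => Finset.sum_congr rfl fun n hn => ?_
  obtain ⟨hn', rfl⟩ := Finset.mem_filter.mp hn
  rw [mul_left_comm, ← pow_add,
    Nat.add_sub_cancel' (S.a_natCast_le_s6 (hsupp n hn').1 (hsupp n hn').2)]

abbrev NonzeroResidue := {i : ZMod S.mult // i ≠ 0}

lemma aug_eq_zero_of_sum_xv_mul_eq_zero (hmed : S.IsMED) {r : ZMod S.mult → S.toRing k}
    (h : ∑ j, S.xv k j * r j = 0) {i : ZMod S.mult} (hi : i ≠ 0) : S.aug k (r i) = 0 := by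
  have hcoeff : ∑ j, ((r j : k[X]) * X ^ S.a j).coeff (S.a i) = 0 := by
    rw [← finsetSum_coeff]
    simpa [mul_comm, coe_xv] using congrArg (fun p : S.toRing k => (p : k[X]).coeff (S.a i)) h
  rwa [Finset.sum_eq_single i, coeff_mul_X_pow', if_pos le_rfl, Nat.sub_self] at hcoeff
  · intro j _ hji
    rw [coeff_mul_X_pow']
    split_ifs with hle
    · by_contra hne
      -- otherwise `a_i = (a_i - a_j) + a_j` with both summands nonzero, so `a_i - m ∈ S`
      have hdiff : S.a i - S.a j ∈ S.carrier := (r j).2 _ hne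
      have hdiff0 : S.a i - S.a j ≠ 0 := fun h0 =>
        hji (S.a_injective (by omega))
      have := S.add_sub_mult_mem hmed hdiff (S.a_mem j) hdiff0 (S.a_ne_zero j)
      rw [Nat.sub_add_cancel hle] at this
      exact S.a_sub_mult_notMem hi this
    · rfl
  · exact fun h => absurd (Finset.mem_univ i) h

lemma exists_eq_xv_mul_of_sum_xv_mul_eq_zero (hmed : S.IsMED) {r : ZMod S.mult → S.toRing k}
    (h : ∑ j, S.xv k j * r j = 0) :
    ∃ s : NonzeroResidue S → ZMod S.mult → S.toRing k,
      (∀ i : NonzeroResidue S, r i = ∑ j, S.xv k j * s i j) ∧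
      r 0 = -∑ i : NonzeroResidue S, ∑ j, S.yv k hmed i j * s i j := by
  choose s hs using fun i : NonzeroResidue S =>
    S.exists_eq_sum_xv_mul k (S.aug_eq_zero_of_sum_xv_mul_eq_zero k hmed h i.2)
  refine ⟨s, hs, eq_neg_of_add_eq_zero_left ?_⟩
  have hx : S.xv k 0 * (r 0 + ∑ i : NonzeroResidue S, ∑ j, S.yv k hmed i j * s i j) = 0 := by
    have hterm (i : NonzeroResidue S) :
        S.xv k 0 * ∑ j, S.yv k hmed i j * s i j = S.xv k i * r i := by
      simp only [hs i, Finset.mul_sum, ← mul_assoc, xv_zero_mul_yv]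
    rw [mul_add, Finset.mul_sum, Finset.sum_congr rfl fun i _ => hterm i,
      ← Fintype.sum_eq_add_sum_subtype_ne (fun j => S.xv k j * r j), h]
  exact (mul_eq_zero.mp hx).resolve_left (S.xv_ne_zero k 0)

/-- `F_0 = R` has a single basis vector; a basis vector of `F_{d+1}` is a word `w` of `d` nonzero
residues followed by a residue `l`. -/
@[reducible] def ResolutionIndex : ℕ → Type
  | 0 => PUnit
  | d + 1 => (Fin d → NonzeroResidue S) × ZMod S.mult

noncomputable instance : ∀ d, Fintype (ResolutionIndex S d)
  | 0 => inferInstanceAs (Fintype PUnit)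
  | d + 1 => inferInstanceAs (Fintype ((Fin d → NonzeroResidue S) × ZMod S.mult))

noncomputable instance : ∀ d, DecidableEq (ResolutionIndex S d)
  | 0 => inferInstanceAs (DecidableEq PUnit)
  | d + 1 => inferInstanceAs (DecidableEq ((Fin d → NonzeroResidue S) × ZMod S.mult))

variable {S} (hmed : S.IsMED)

/-- `mul_neg` does not rewrite in `S.toRing k`, whose `Neg` comes from `NegMemClass` rather than
from its ring structure. -/
lemma toRing_mul_neg (a b : S.toRing k) : a * -b = -(a * b) := mul_neg a b

/-- The `(w, ·)`-block of `diffFun d f` is the syzygy of `(x_j)_j` that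
`exists_eq_xv_mul_of_sum_xv_mul_eq_zero` builds from `s i j = f (w i, j)`. -/
noncomputable def diffFun :
    ∀ d, (ResolutionIndex S (d + 1) → S.toRing k) → ResolutionIndex S d → S.toRing k
  | 0 => fun f _ => ∑ j, S.xv k j * f (Fin.elim0, j)
  | _ + 1 => fun f b =>
      if h : b.2 = 0 then -∑ i : NonzeroResidue S, ∑ j, S.yv k hmed i j * f (Fin.snoc b.1 i, j)
      else ∑ j, S.xv k j * f (Fin.snoc b.1 ⟨b.2, h⟩, j)

lemma diffFun_zero (f : ResolutionIndex S 1 → S.toRing k) (b : ResolutionIndex S 0) :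
    diffFun k hmed 0 f b = ∑ j, S.xv k j * f (Fin.elim0, j) := rfl

lemma diffFun_succ_zero {e : ℕ} (f : ResolutionIndex S (e + 2) → S.toRing k)
    (w : Fin e → NonzeroResidue S) :
    diffFun k hmed (e + 1) f (w, 0) =
      -∑ i : NonzeroResidue S, ∑ j, S.yv k hmed i j * f (Fin.snoc w i, j) := dif_pos rfl

lemma diffFun_succ_of_ne_zero {e : ℕ} (f : ResolutionIndex S (e + 2) → S.toRing k)
    (w : Fin e → NonzeroResidue S) {l : ZMod S.mult} (hl : l ≠ 0) :
    diffFun k hmed (e + 1) f (w, l) = ∑ j, S.xv k j * f (Fin.snoc w ⟨l, hl⟩, j) := dif_neg hl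

noncomputable def diffLinearMap (d : ℕ) :
    (ResolutionIndex S (d + 1) → S.toRing k) →ₗ[S.toRing k]
      (ResolutionIndex S d → S.toRing k) where
  toFun := diffFun k hmed d
  map_add' f g := by
    funext b
    cases d with
    | zero => simp [diffFun, Pi.add_apply, mul_add, Finset.sum_add_distrib]
    | succ e =>
      by_cases hb : b.2 = 0
      · simp [diffFun, hb, Pi.add_apply, mul_add, Finset.sum_add_distrib, add_comm]
      · simp [diffFun, hb, Pi.add_apply, mul_add, Finset.sum_add_distrib]
  map_smul' c f := by
    funext b
    cases d with
    | zero => simp [diffFun, Pi.smul_apply, Finset.mul_sum, mul_left_comm]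
    | succ e =>
      by_cases hb : b.2 = 0
      · simp [diffFun, hb, toRing_mul_neg, Finset.mul_sum, mul_left_comm]
      · simp [diffFun, hb, Pi.smul_apply, Finset.mul_sum, mul_left_comm]

lemma sum_mul_diffFun_eq_zero {c : ZMod S.mult → S.toRing k}
    (hc : ∀ i j, c 0 * S.yv k hmed i j = c i * S.xv k j) {e : ℕ}
    (w : Fin e → NonzeroResidue S) (g : ResolutionIndex S (e + 2) → S.toRing k) :
    ∑ j, c j * diffFun k hmed (e + 1) g (w, j) = 0 := by
  rw [Fintype.sum_eq_add_sum_subtype_ne (fun j => c j * diffFun k hmed (e + 1) g (w, j)) 0]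
  simp only [diffFun_succ_zero, fun i : NonzeroResidue S => diffFun_succ_of_ne_zero k hmed g w i.2,
    toRing_mul_neg, neg_add_eq_zero, Finset.mul_sum, ← mul_assoc, hc]

lemma diffFun_diffFun (d : ℕ) (f : ResolutionIndex S (d + 2) → S.toRing k) :
    diffFun k hmed d (diffFun k hmed (d + 1) f) = 0 := by
  funext b
  cases d with
  | zero => exact sum_mul_diffFun_eq_zero k hmed (xv_zero_mul_yv k hmed) Fin.elim0 f
  | succ e =>
    obtain ⟨w, l⟩ := b
    rw [Pi.zero_apply]
    by_cases hl : l = 0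
    · subst hl
      simp only [diffFun_succ_zero, sum_mul_diffFun_eq_zero k hmed (yv_mul_yv k hmed _),
        Finset.sum_const_zero, neg_zero]
    · rw [diffFun_succ_of_ne_zero k hmed _ w hl]
      exact sum_mul_diffFun_eq_zero k hmed (xv_zero_mul_yv k hmed) _ f

variable (S) in
noncomputable abbrev resolutionModule (d : ℕ) : ModuleCat (S.toRing k) :=
  ModuleCat.of _ (ResolutionIndex S d → S.toRing k)

noncomputable def resolutionComplex : ChainComplex (ModuleCat (S.toRing k)) ℕ :=
  ChainComplex.of (resolutionModule k S) (fun d => ModuleCat.ofHom (diffLinearMap k hmed d))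
    fun d => ModuleCat.hom_ext (LinearMap.ext (diffFun_diffFun k hmed d))

lemma resolutionComplex_d (d : ℕ) :
    (resolutionComplex k hmed).d (d + 1) d = ModuleCat.ofHom (diffLinearMap k hmed d) :=
  ChainComplex.of_d (resolutionModule k S) (fun d => ModuleCat.ofHom (diffLinearMap k hmed d)) d

lemma sum_xv_mul_eq_zero_of_diffFun_eq_zero {d : ℕ} {z : ResolutionIndex S (d + 1) → S.toRing k}
    (hz : diffFun k hmed d z = 0) (w : Fin d → NonzeroResidue S) :
    ∑ j, S.xv k j * z (w, j) = 0 := by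
  cases d with
  | zero =>
    rw [Subsingleton.elim w Fin.elim0]
    exact congrFun hz PUnit.unit
  | succ e =>
    have h := congrFun hz (Fin.init w, w (Fin.last e))
    rwa [diffFun_succ_of_ne_zero k hmed z _ (w (Fin.last e)).2, Subtype.coe_eta,
      Fin.snoc_init_self] at h

lemma exists_diffFun_eq_of_diffFun_eq_zero {d : ℕ} {z : ResolutionIndex S (d + 1) → S.toRing k}
    (hz : diffFun k hmed d z = 0) :
    ∃ f : ResolutionIndex S (d + 2) → S.toRing k, diffFun k hmed (d + 1) f = z := by
  choose s hs hs₀ using fun w : Fin d → NonzeroResidue S =>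
    S.exists_eq_xv_mul_of_sum_xv_mul_eq_zero k hmed
      (sum_xv_mul_eq_zero_of_diffFun_eq_zero k hmed hz w)
  refine ⟨fun p => s (Fin.init p.1) (p.1 (Fin.last d)) p.2, funext fun ⟨w, l⟩ => ?_⟩
  by_cases hl : l = 0
  · subst hl
    simp only [diffFun_succ_zero, Fin.init_snoc, Fin.snoc_last]
    exact (hs₀ w).symm
  · simp only [diffFun_succ_of_ne_zero k hmed _ w hl, Fin.init_snoc, Fin.snoc_last]
    exact (hs w ⟨l, hl⟩).symm

lemma resolutionComplex_exactAt_succ (d : ℕ) : (resolutionComplex k hmed).ExactAt (d + 1) := by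
  rw [HomologicalComplex.exactAt_iff' _ (d + 2) (d + 1) d (by simp) (by simp),
    ShortComplex.moduleCat_exact_iff]
  intro z hz
  have hz' : (resolutionComplex k hmed).d (d + 1) d z = 0 := hz
  rw [resolutionComplex_d] at hz'
  obtain ⟨f, hf⟩ := exists_diffFun_eq_of_diffFun_eq_zero k hmed hz'
  refine ⟨f, ?_⟩
  change (resolutionComplex k hmed).d (d + 2) (d + 1) f = z
  rw [resolutionComplex_d]
  exact hf

variable (S) in
noncomputable def augmentation :
    resolutionModule k S 0 ⟶ ModuleCat.of (S.toRing k) (ResMod k S) :=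
  ModuleCat.ofHom
    { toFun f := S.aug k (f PUnit.unit)
      map_add' _ _ := map_add (S.aug k) _ _
      map_smul' c _ := map_mul (S.aug k) c _ }

lemma d_comp_augmentation : (resolutionComplex k hmed).d 1 0 ≫ augmentation k S = 0 := by
  rw [resolutionComplex_d]
  ext f
  change S.aug k (∑ j, S.xv k j * f (Fin.elim0, j)) = 0
  simp [aug_xv]

lemma exact_augmentation : (ShortComplex.mk _ _ (d_comp_augmentation k hmed)).Exact := by
  rw [ShortComplex.moduleCat_exact_iff]
  intro g hg
  obtain ⟨q, hq⟩ := S.exists_eq_sum_xv_mul k (p := g PUnit.unit) hg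
  exact ⟨fun p => q p.2, funext fun _ => hq.symm⟩

variable (S) in
lemma augmentation_surjective : Function.Surjective (augmentation k S) := fun c =>
  ⟨fun _ => algebraMap k (S.toRing k) c, S.aug_algebraMap k c⟩

noncomputable def resolution : ProjectiveResolution (ModuleCat.of (S.toRing k) (ResMod k S)) where
  complex := resolutionComplex k hmed
  projective d := (IsProjective.iff_projective _).mp inferInstance
  π := (ChainComplex.toSingle₀Equiv _ _).symm ⟨augmentation k S, d_comp_augmentation k hmed⟩
  quasiIso := ⟨fun n => by
    cases n with
    | zero =>
      rw [ChainComplex.quasiIsoAt₀_iff, ShortComplex.quasiIso_iff_of_zeros' _ ?_ rfl rfl]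
      · exact ⟨exact_augmentation k hmed,
          (ModuleCat.epi_iff_surjective _).mpr (augmentation_surjective k S)⟩
      · exact (resolutionComplex k hmed).shape 0 0 (by simp)
    | succ d =>
      rw [quasiIsoAt_iff_exactAt' (hL := ChainComplex.exactAt_succ_single_obj ..)]
      exact resolutionComplex_exactAt_succ k hmed d⟩

lemma aug_diffFun (d : ℕ) (f : ResolutionIndex S (d + 1) → S.toRing k)
    (b : ResolutionIndex S d) :
    S.aug k (diffFun k hmed d f b) = 0 := by
  cases d with
  | zero => simp [diffFun_zero, aug_xv]
  | succ e =>
    obtain ⟨w, l⟩ := b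
    by_cases hl : l = 0
    · subst hl
      simp [diffFun_succ_zero, aug_yv]
    · simp [diffFun_succ_of_ne_zero k hmed f w hl, aug_xv]

open MonoidalCategory in
variable (S) in
lemma residue_whiskerLeft_eq_zero {ι κ : Type} [Fintype κ] [DecidableEq κ]
    (φ : (ι → S.toRing k) →ₗ[S.toRing k] (κ → S.toRing k))
    (hφ : ∀ f b, S.aug k (φ f b) = 0) :
    ModuleCat.of (S.toRing k) (ResMod k S) ◁ ModuleCat.ofHom φ = 0 := by
  refine ModuleCat.MonoidalCategory.tensor_ext fun a f => ?_
  change a ⊗ₜ[S.toRing k] φ f = 0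
  rw [← Finset.univ_sum_single (φ f), TensorProduct.tmul_sum]
  refine Finset.sum_eq_zero fun b _ => ?_
  rw [← mul_one (φ f b), ← smul_eq_mul, Pi.single_smul, ← TensorProduct.smul_tmul]
  have hzero : φ f b • a = 0 := by
    change S.aug k (φ f b) * (show k from a) = 0
    rw [hφ, zero_mul]
  rw [hzero, TensorProduct.zero_tmul]

variable (S) in
noncomputable abbrev residueTensor : ModuleCat (S.toRing k) ⥤ ModuleCat (S.toRing k) :=
  (MonoidalCategory.tensoringLeft _).obj (ModuleCat.of (S.toRing k) (ResMod k S))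

lemma residueTensor_resolutionComplex_d (i j : ℕ) :
    (((residueTensor k S).mapHomologicalComplex _).obj (resolutionComplex k hmed)).d i j = 0 := by
  change (residueTensor k S).map ((resolutionComplex k hmed).d i j) = 0
  by_cases h : i = j + 1
  · subst h
    rw [resolutionComplex_d]
    exact residue_whiskerLeft_eq_zero k S _ (aug_diffFun k hmed j)
  · rw [(resolutionComplex k hmed).shape i j (fun hr => h (by simpa using hr.symm)),
      Functor.map_zero]

noncomputable def torIso (n : ℕ) :
    ((Tor (ModuleCat (S.toRing k)) n).obj (ModuleCat.of (S.toRing k) (ResMod k S))).obj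
      (ModuleCat.of (S.toRing k) (ResMod k S)) ≅
      (residueTensor k S).obj (resolutionModule k S n) :=
  (resolution k hmed).isoLeftDerivedObj (residueTensor k S) n ≪≫
    ShortComplex.LeftHomologyData.homologyIso
      (ShortComplex.LeftHomologyData.ofZeros _ (residueTensor_resolutionComplex_d k hmed _ _)
        (residueTensor_resolutionComplex_d k hmed _ _))

variable (S) in
noncomputable def restrictScalarsPiResModEquiv (ι : Type) :
    RestrictScalars k (S.toRing k) (ι → ResMod k S) ≃ₗ[k] (ι → k) where
  toFun f := f
  invFun g := g
  map_add' _ _ := rfl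
  left_inv _ := rfl
  right_inv _ := rfl
  map_smul' c f := by
    funext b
    change S.aug k (algebraMap k (S.toRing k) c) * (show k from f b) = c * (show k from f b)
    rw [S.aug_algebraMap k c]

lemma torDim_eq_card (hmed : S.IsMED) (n : ℕ) :
    S.torDim k n = Fintype.card (ResolutionIndex S n) := by
  rw [torDim, ((torIso k hmed n).toLinearEquiv.trans (TensorProduct.piScalarRight _ _ _ _)
    |>.restrictScalarsCongr.trans (restrictScalarsPiResModEquiv k S _)).rank_eq, rank_fun']

variable (S)

lemma card_nonzeroResidue : Fintype.card (NonzeroResidue S) = S.mult - 1 := by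
  rw [Fintype.card_subtype_compl, Fintype.card_subtype_eq, ZMod.card]

lemma card_resolutionIndex_succ (d : ℕ) :
    Fintype.card (ResolutionIndex S (d + 1)) = S.mult * (S.mult - 1) ^ d := by
  rw [Fintype.card_prod, Fintype.card_fun, card_nonzeroResidue, ZMod.card, Fintype.card_fin,
    mul_comm]

/-- **(Consequence of Theorem 3.2.)** If `S` has multiplicity `m` and maximal embedding
dimension, then `dim_k Tor_0^R(k,k) = 1` and `dim_k Tor_d^R(k,k) = m(m-1)^{d-1}` for
`d ≥ 1`; equivalently `P_k^R(z) = (1+z)/(1-(m-1)z)`. -/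
theorem torDim_of_isMED (k : Type) [Field k] (S : NumericalSemigroup)
    (m : ℕ) (hm : S.mult = m) (hmed : S.IsMED) :
    S.torDim k 0 = 1 ∧
    ∀ d : ℕ, 1 ≤ d → S.torDim k d = ((m * (m - 1) ^ (d - 1) : ℕ) : Cardinal) := by
  subst hm
  refine ⟨by simp [torDim_eq_card k hmed], fun d hd => ?_⟩
  obtain ⟨e, rfl⟩ := Nat.exists_eq_add_of_le' hd
  rw [torDim_eq_card k hmed, card_resolutionIndex_succ, Nat.add_sub_cancel]

end NumericalSemigroup
end

section
/- The numerical semigroups S = ⟨5, 6, 19⟩ and S″ = ⟨5, 31, 99⟩ lie in the same face of the Kunz cone C_5 (they have the same Kunz poset), yet their associated graded rings differ homologically: with Q′ = k[y, x_1, x_4] mapping onto k[S] via y ↦ t⁵, x_1 ↦ t⁶, x_4 ↦ t¹⁹ (resp. onto k[S″] via y ↦ t⁵, x_1 ↦ t³¹, x_4 ↦ t⁹⁹), the ideals of initial forms are I_S^* = (x_1⁵, y x_4, x_1 x_4, x_4²) and I_{S″}^* = (x_1⁴, x_1 x_4, x_4²); in particular I_S^* has minimal number of generators 4 while I_{S″}^*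 has minimal number of generators 3, so β_1^{Q′}(gr_𝔪(k[S])) = 4 ≠ 3 = β_1^{Q′}(gr_𝔪(k[S″])). (Part of the Proposition in Section 5, via Example 5.3.) -/
open MvPolynomial

/-- `ap M m i` is the smallest element of the submonoid `M ⊆ ℕ` congruent to `i` mod `m`
(the Apéry element `a_i` when `m` is the multiplicity of `M`). -/
noncomputable def ap (M : AddSubmonoid ℕ) (m i : ℕ) : ℕ :=
  sInf {n | n ∈ M ∧ n % m = i % m}

/-- Two numerical semigroups of multiplicity `m` lie in the same face of the Kunz cone
`C_m`: the Apéry set equalities `a_i + a_j = a_{(i+j) mod m}` hold in one iff they hold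
in the other (identical Kunz posets). -/
def SameFace (M M' : AddSubmonoid ℕ) (m : ℕ) : Prop :=
  ∀ i j : ℕ, 1 ≤ i → i ≤ m - 1 → 1 ≤ j → j ≤ m - 1 → (i + j) % m ≠ 0 →
    (ap M m i + ap M m j = ap M m ((i + j) % m) ↔
      ap M' m i + ap M' m j = ap M' m ((i + j) % m))

variable (k : Type) [Field k]

/-- The map `Q' = k[z_1, …, z_e] → k[t]` sending `z_i ↦ t^{n_i}`. -/
noncomputable def phi {N : ℕ} (e : Fin N → ℕ) :
    MvPolynomial (Fin N) k →ₐ[k] Polynomial k :=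
  aeval fun i => Polynomial.X ^ e i

/-- The defining toric ideal `I' = ker(Q' → k[t])`. -/
noncomputable def toricIdeal {N : ℕ} (e : Fin N → ℕ) : Ideal (MvPolynomial (Fin N) k) :=
  RingHom.ker (phi k e).toRingHom

/-- The initial form `f^*`: the homogeneous component of `f` of lowest degree (with
respect to the standard grading, each variable in degree 1). -/
noncomputable def initialForm {N : ℕ} (f : MvPolynomial (Fin N) k) :
    MvPolynomial (Fin N) k :=
  homogeneousComponent (sInf {n | homogeneousComponent n f ≠ 0}) f

/-- The ideal of initial forms `I^* = ⟨f^* : 0 ≠ f ∈ I⟩`, so that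
`gr_𝔪(k[S]) ≅ Q'/I^*`. -/
noncomputable def star {N : ℕ} (I : Ideal (MvPolynomial (Fin N) k)) :
    Ideal (MvPolynomial (Fin N) k) :=
  Ideal.span {g | ∃ f ∈ I, f ≠ 0 ∧ g = initialForm k f}

/-- The minimal number of generators of an ideal `J ⊆ Q'`:
`μ(J) = dim_k J/(z_1, …, z_e)J = β₁^{Q'}(Q'/J)`. -/
noncomputable def mu {N : ℕ} (J : Ideal (MvPolynomial (Fin N) k)) : ℕ :=
  Module.finrank k (RestrictScalars k (MvPolynomial (Fin N) k)
    (↥J ⧸ ((Ideal.span (Set.range (X : Fin N → MvPolynomial (Fin N) k))) •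
      (⊤ : Submodule (MvPolynomial (Fin N) k) ↥J))))

/-!
The Apéry sets `{6, 12, 18, 19}` and `{31, 62, 93, 99}` satisfy the same relations
`a₁ + a₁ = a₂`, `a₁ + a₂ = a₃` and no others.

The toric ideal is the kernel of a map that is homogeneous for the weighting `deg zᵢ = nᵢ`, so
the coefficients of any `f ∈ I'` sum to zero on every weight fibre. Hence a monomial that is the
only one of its weight among monomials of standard degree at most its own can never be a
lowest-degree term of an element of `I'`. Every monomial outside the candidate monomial ideal is of
this kind, while every candidate generator `x^g` is the initial form of a binomial `x^g - x^d` with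
`d` of the same weight and larger degree. Finally, the minimal monomial generators of a monomial
ideal `J` project to a `k`-basis of `J/𝔪J`, because `𝔪J` only contains monomials that are proper
multiples of generators.
-/

theorem mem_closure_triple {a b c n : ℕ} :
    n ∈ AddSubmonoid.closure {a, b, c} ↔ ∃ x y z : ℕ, x * a + y * b + z * c = n := by
  rw [← Set.singleton_union, AddSubmonoid.closure_union, AddSubmonoid.mem_sup]
  simp only [AddSubmonoid.mem_closure_singleton, AddSubmonoid.mem_closure_pair, smul_eq_mul]
  constructor
  · rintro ⟨_, ⟨x, rfl⟩, _, ⟨y, z, rfl⟩, rfl⟩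
    exact ⟨x, y, z, by ring⟩
  · rintro ⟨x, y, z, rfl⟩
    exact ⟨_, ⟨x, rfl⟩, _, ⟨y, z, rfl⟩, by ring⟩

theorem ap_closure_triple_eq {a b c m i v : ℕ} (x y z : ℕ) (hv : x * a + y * b + z * c = v)
    (hmod : v % m = i % m)
    (hmin : ∀ x y z : ℕ, (x * a + y * b + z * c) % m = i % m → v ≤ x * a + y * b + z * c) :
    ap (AddSubmonoid.closure {a, b, c}) m i = v := by
  refine IsLeast.csInf_eq ⟨⟨mem_closure_triple.2 ⟨x, y, z, hv⟩, hmod⟩, ?_⟩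
  rintro n ⟨hn, hn_mod⟩
  obtain ⟨x, y, z, rfl⟩ := mem_closure_triple.1 hn
  exact hmin x y z hn_mod

theorem ap_closure_five_six_nineteen :
    ap (AddSubmonoid.closure {5, 6, 19}) 5 1 = 6 ∧
      ap (AddSubmonoid.closure {5, 6, 19}) 5 2 = 12 ∧
      ap (AddSubmonoid.closure {5, 6, 19}) 5 3 = 18 ∧
      ap (AddSubmonoid.closure {5, 6, 19}) 5 4 = 19 := by
  refine ⟨ap_closure_triple_eq 0 1 0 rfl rfl ?_, ap_closure_triple_eq 0 2 0 rfl rfl ?_,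
    ap_closure_triple_eq 0 3 0 rfl rfl ?_, ap_closure_triple_eq 0 0 1 rfl rfl ?_⟩ <;>
  intro x y z h <;> rcases Nat.eq_zero_or_pos z with rfl | hz <;> omega

theorem ap_closure_five_thirtyOne_ninetyNine :
    ap (AddSubmonoid.closure {5, 31, 99}) 5 1 = 31 ∧
      ap (AddSubmonoid.closure {5, 31, 99}) 5 2 = 62 ∧
      ap (AddSubmonoid.closure {5, 31, 99}) 5 3 = 93 ∧
      ap (AddSubmonoid.closure {5, 31, 99}) 5 4 = 99 := by
  refine ⟨ap_closure_triple_eq 0 1 0 rfl rfl ?_, ap_closure_triple_eq 0 2 0 rfl rfl ?_,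
    ap_closure_triple_eq 0 3 0 rfl rfl ?_, ap_closure_triple_eq 0 0 1 rfl rfl ?_⟩ <;>
  intro x y z h <;> rcases Nat.eq_zero_or_pos z with rfl | hz <;> omega

theorem sameFace_closure_five_six_nineteen_five_thirtyOne_ninetyNine :
    SameFace (AddSubmonoid.closure {5, 6, 19}) (AddSubmonoid.closure {5, 31, 99}) 5 := by
  obtain ⟨hS₁, hS₂, hS₃, hS₄⟩ := ap_closure_five_six_nineteen
  obtain ⟨hT₁, hT₂, hT₃, hT₄⟩ := ap_closure_five_thirtyOne_ninetyNine
  intro i j hi₁ hi₄ hj₁ hj₄ hij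
  interval_cases i <;> interval_cases j <;> simp_all

section InitialForm

variable {k} {N : ℕ}

theorem initialForm_eq_homogeneousComponent {f : MvPolynomial (Fin N) k} {n : ℕ}
    (hn : homogeneousComponent n f ≠ 0) (hlt : ∀ m < n, homogeneousComponent m f = 0) :
    initialForm k f = homogeneousComponent n f := by
  have hleast : IsLeast {m | homogeneousComponent m f ≠ 0} n :=
    ⟨hn, fun m hm => not_lt.1 fun h => hm (hlt m h)⟩
  rw [initialForm, hleast.csInf_eq]

theorem coeff_ne_zero_and_lower_coeff_eq_zero_of_mem_support_initialForm
    {f : MvPolynomial (Fin N) k} {e : Fin N →₀ ℕ} (he : e ∈ (initialForm k f).support) :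
    coeff e f ≠ 0 ∧ ∀ d : Fin N →₀ ℕ, d.degree < e.degree → coeff d f = 0 := by
  rw [mem_support_iff, initialForm, coeff_homogeneousComponent] at he
  split_ifs at he with hdeg
  · refine ⟨he, fun d hd => ?_⟩
    have hzero : homogeneousComponent d.degree f = 0 := by
      by_contra h
      exact Nat.notMem_of_lt_sInf (hdeg ▸ hd) h
    simpa [coeff_homogeneousComponent] using congr_arg (coeff d) hzero
  · exact absurd rfl he

theorem initialForm_monomial_sub_monomial {d₁ d₂ : Fin N →₀ ℕ} (h : d₁.degree < d₂.degree) :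
    initialForm k (monomial d₁ (1 : k) - monomial d₂ 1) = monomial d₁ 1 := by
  have hc : ∀ n, homogeneousComponent n (monomial d₁ (1 : k) - monomial d₂ 1) =
      (if n = d₁.degree then monomial d₁ 1 else 0) - if n = d₂.degree then monomial d₂ 1 else 0 :=
    fun n => by
      rw [map_sub, homogeneousComponent_of_mem (isHomogeneous_monomial _ rfl),
        homogeneousComponent_of_mem (isHomogeneous_monomial _ rfl)]
  rw [initialForm_eq_homogeneousComponent (n := d₁.degree)] <;> simp only [hc]
  · simp [h.ne]
  · simp [h.ne]
  · intro m hm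
    simp [hm.ne, (hm.trans h).ne]

end InitialForm

section Toric

variable {k} {N : ℕ} (w : Fin N → ℕ)

theorem phi_monomial (d : Fin N →₀ ℕ) (c : k) :
    phi k w (monomial d c) = Polynomial.C c * Polynomial.X ^ Finsupp.weight w d := by
  rw [phi, aeval_monomial, Finsupp.weight_apply, Polynomial.algebraMap_eq, Finsupp.prod,
    Finsupp.sum, ← Finset.prod_pow_eq_pow_sum]
  simp_rw [← pow_mul, smul_eq_mul, mul_comm]

theorem coeff_phi (f : MvPolynomial (Fin N) k) (n : ℕ) :
    (phi k w f).coeff n = ∑ d ∈ f.support with Finsupp.weight w d = n, coeff d f := by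
  conv_lhs => rw [f.as_sum, map_sum, Polynomial.finsetSum_coeff]
  simp_rw [phi_monomial, Polynomial.coeff_C_mul_X_pow, Finset.sum_filter, eq_comm]

theorem sum_coeff_eq_zero_of_mem_toricIdeal {f : MvPolynomial (Fin N) k}
    (hf : f ∈ toricIdeal k w) (n : ℕ) :
    ∑ d ∈ f.support with Finsupp.weight w d = n, coeff d f = 0 := by
  rw [← coeff_phi, show phi k w f = 0 from hf, Polynomial.coeff_zero]

theorem monomial_sub_monomial_mem_toricIdeal {d₁ d₂ : Fin N →₀ ℕ}
    (h : Finsupp.weight w d₁ = Finsupp.weight w d₂) :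
    monomial d₁ (1 : k) - monomial d₂ 1 ∈ toricIdeal k w := by
  show phi k w _ = 0
  rw [map_sub, phi_monomial, phi_monomial, h, sub_self]

theorem monomial_mem_star_toricIdeal {d₁ d₂ : Fin N →₀ ℕ}
    (hw : Finsupp.weight w d₁ = Finsupp.weight w d₂) (hd : d₁.degree < d₂.degree) :
    monomial d₁ (1 : k) ∈ star k (toricIdeal k w) := by
  have hne : monomial d₁ (1 : k) - monomial d₂ 1 ≠ 0 := by
    rw [sub_ne_zero, Ne, monomial_left_inj one_ne_zero]
    exact fun h => hd.ne (h ▸ rfl)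
  exact Ideal.subset_span ⟨_, monomial_sub_monomial_mem_toricIdeal w hw, hne,
    (initialForm_monomial_sub_monomial hd).symm⟩

theorem star_toricIdeal_le_span_monomial (G : Set (Fin N →₀ ℕ))
    (hG : ∀ e : Fin N →₀ ℕ, (∀ g ∈ G, ¬g ≤ e) → ∀ d : Fin N →₀ ℕ,
      Finsupp.weight w d = Finsupp.weight w e → e.degree ≤ d.degree → d = e) :
    star k (toricIdeal k w) ≤ Ideal.span ((fun s => monomial s (1 : k)) '' G) := by
  refine Ideal.span_le.2 ?_
  rintro _ ⟨f, hf, -, rfl⟩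
  rw [SetLike.mem_coe, mem_ideal_span_monomial_image]
  intro e he
  by_contra! hstd
  obtain ⟨hfe, hlow⟩ := coeff_ne_zero_and_lower_coeff_eq_zero_of_mem_support_initialForm he
  have hsum := sum_coeff_eq_zero_of_mem_toricIdeal w hf (Finsupp.weight w e)
  rw [Finset.sum_eq_single_of_mem e (by simpa using hfe)] at hsum
  · exact hfe hsum
  rintro d hd hde
  rw [Finset.mem_filter, mem_support_iff] at hd
  by_cases hlt : d.degree < e.degree
  · exact hlow d hlt
  · exact absurd (hG e hstd d hd.2 (not_lt.1 hlt)) hde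

theorem star_toricIdeal_eq_span_monomial (G : Set (Fin N →₀ ℕ))
    (hG_mem : ∀ g ∈ G, ∃ d : Fin N →₀ ℕ,
      Finsupp.weight w g = Finsupp.weight w d ∧ g.degree < d.degree)
    (hG : ∀ e : Fin N →₀ ℕ, (∀ g ∈ G, ¬g ≤ e) → ∀ d : Fin N →₀ ℕ,
      Finsupp.weight w d = Finsupp.weight w e → e.degree ≤ d.degree → d = e) :
    star k (toricIdeal k w) = Ideal.span ((fun s => monomial s (1 : k)) '' G) := by
  refine le_antisymm (star_toricIdeal_le_span_monomial w G hG) (Ideal.span_le.2 ?_)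
  rintro _ ⟨g, hg, rfl⟩
  obtain ⟨d, hw, hd⟩ := hG_mem g hg
  exact monomial_mem_star_toricIdeal w hw hd

end Toric

section MinimalGenerators

theorem sub_C_coeff_zero_mem_span_X {σ R : Type*} [CommRing R] (q : MvPolynomial σ R) :
    q - C (coeff 0 q) ∈ Ideal.span (Set.range (X : σ → MvPolynomial σ R)) := by
  rw [← Set.image_univ, mem_ideal_span_X_image]
  intro d hd
  have hd0 : d ≠ 0 := by
    rintro rfl
    simp at hd
  obtain ⟨i, hi⟩ := Finsupp.ne_iff.1 hd0
  exact ⟨i, trivial, hi⟩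

open scoped Pointwise in
theorem exists_single_add_le_of_mem_span_X_mul_span_monomial {σ R : Type*} [CommSemiring R]
    {A : Set (σ →₀ ℕ)} {x : MvPolynomial σ R}
    (hx : x ∈ Ideal.span (Set.range (X : σ → MvPolynomial σ R)) *
      Ideal.span ((fun s => monomial s (1 : R)) '' A))
    {d : σ →₀ ℕ} (hd : d ∈ x.support) : ∃ l, ∃ a ∈ A, Finsupp.single l 1 + a ≤ d := by
  have hsub : Set.range (X : σ → MvPolynomial σ R) * (fun s => monomial s (1 : R)) '' A ⊆
      (fun s => monomial s 1) '' {e | ∃ l, ∃ a ∈ A, Finsupp.single l 1 + a = e} := by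
    rintro _ ⟨_, ⟨l, rfl⟩, _, ⟨a, ha, rfl⟩, rfl⟩
    exact ⟨_, ⟨l, a, ha, rfl⟩, by simp only [X, monomial_mul, one_mul]⟩
  rw [Ideal.span_mul_span'] at hx
  obtain ⟨_, ⟨l, a, ha, rfl⟩, hle⟩ :=
    mem_ideal_span_monomial_image.1 (Ideal.span_mono hsub hx) d hd
  exact ⟨l, a, ha, hle⟩

variable {k}

theorem span_mkQ_image_eq_top {σ : Type*} {J : Ideal (MvPolynomial σ k)} {s : Set J}
    (hs : Submodule.span (MvPolynomial σ k) s = ⊤) :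
    Submodule.span k ((Ideal.span (Set.range (X : σ → MvPolynomial σ k)) • ⊤ :
      Submodule (MvPolynomial σ k) J).mkQ '' s) = ⊤ := by
  set I := (Ideal.span (Set.range (X : σ → MvPolynomial σ k)) • ⊤ :
    Submodule (MvPolynomial σ k) J)
  set P := Submodule.span k (I.mkQ '' s)
  -- `𝔪` kills `J/𝔪J`, so polynomials act on it through their constant coefficients.
  have hsmul : ∀ (q : MvPolynomial σ k) x, x ∈ P → q • x ∈ P := by
    intro q x hx
    have hq : q = C (coeff 0 q) + (q - C (coeff 0 q)) := by ring
    have htors := Module.isTorsionBySet_quotient_ideal_smul J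
      (Ideal.span (Set.range (X : σ → MvPolynomial σ k)))
    rw [hq, add_smul, @htors x ⟨_, sub_C_coeff_zero_mem_span_X q⟩, add_zero, ← algebraMap_eq,
      algebraMap_smul]
    exact P.smul_mem _ hx
  let P' : Submodule (MvPolynomial σ k) (J ⧸ I) := { P with smul_mem' := hsmul }
  have hP' : Submodule.span (MvPolynomial σ k) (I.mkQ '' s) ≤ P' :=
    Submodule.span_le.2 Submodule.subset_span
  rw [← Submodule.map_span, hs, Submodule.map_top, Submodule.range_mkQ, top_le_iff] at hP'
  exact eq_top_iff.2 fun x _ => (hP' ▸ Submodule.mem_top : x ∈ P')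

variable {N : ℕ}

theorem mu_eq_finrank (J : Ideal (MvPolynomial (Fin N) k)) :
    mu k J = Module.finrank k (J ⧸
      (Ideal.span (Set.range (X : Fin N → MvPolynomial (Fin N) k)) • ⊤ :
        Submodule (MvPolynomial (Fin N) k) J)) :=
  LinearEquiv.finrank_eq <| (RestrictScalars.addEquiv _ _ _).toLinearEquiv fun c x => by
    rw [RestrictScalars.addEquiv_map_smul, algebraMap_smul]

theorem mu_span_monomial (G : Finset (Fin N →₀ ℕ))
    (hG : ∀ a ∈ G, ∀ b ∈ G, ∀ l, ¬Finsupp.single l 1 + b ≤ a) :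
    mu k (Ideal.span ((fun s => monomial s (1 : k)) '' (G : Set (Fin N →₀ ℕ)))) = G.card := by
  set J := Ideal.span ((fun s => monomial s (1 : k)) '' (G : Set (Fin N →₀ ℕ)))
  set I := (Ideal.span (Set.range (X : Fin N → MvPolynomial (Fin N) k)) • ⊤ :
    Submodule (MvPolynomial (Fin N) k) J)
  let g : G → J := fun a => ⟨monomial a 1, Ideal.subset_span ⟨a, a.2, rfl⟩⟩
  let v : G → J ⧸ I := I.mkQ.restrictScalars k ∘ g
  have hspan : Submodule.span k (Set.range v) = ⊤ := by
    rw [Set.range_comp]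
    refine span_mkQ_image_eq_top ?_
    convert Submodule.span_span_coe_preimage (R := MvPolynomial (Fin N) k)
    ext ⟨x, hx⟩
    simp [g]
  have hli : LinearIndependent k v := by
    rw [Fintype.linearIndependent_iff]
    intro c hc a
    have hmem : (∑ b, c b • g b : J) ∈ I := by
      rw [← Submodule.Quotient.mk_eq_zero, ← hc]
      exact (map_sum (I.mkQ.restrictScalars k) (fun b => c b • g b) _).trans
        (Finset.sum_congr rfl fun b _ => map_smul _ _ _)
    rw [Submodule.mem_smul_top_iff, Ideal.smul_eq_mul] at hmem
    have hcoeff : coeff a ((∑ b, c b • g b : J) : MvPolynomial (Fin N) k) = c a := by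
      simp [g, smul_monomial, coeff_sum, coeff_monomial]
    by_contra hca
    obtain ⟨l, b, hb, hle⟩ := exists_single_add_le_of_mem_span_X_mul_span_monomial hmem
      (mem_support_iff.2 (hcoeff ▸ hca))
    exact hG a a.2 b hb l hle
  rw [mu_eq_finrank, Module.finrank_eq_card_basis (Module.Basis.mk hli hspan.ge),
    Fintype.card_coe]

end MinimalGenerators

theorem X_mul_X_eq_monomial {σ R : Type*} [CommSemiring R] (i j : σ) :
    (X i * X j : MvPolynomial σ R) = monomial (Finsupp.single i 1 + Finsupp.single j 1) 1 := by
  rw [X, X, monomial_mul, one_mul]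

theorem Finsupp.weight_fin_three (a b c : ℕ) (d : Fin 3 →₀ ℕ) :
    Finsupp.weight ![a, b, c] d = d 0 * a + d 1 * b + d 2 * c := by
  simp [Finsupp.weight_apply, Finsupp.sum_fintype, Fin.sum_univ_three]

theorem Finsupp.degree_fin_three (d : Fin 3 →₀ ℕ) : d.degree = d 0 + d 1 + d 2 := by
  simp [Finsupp.degree_eq_weight_one, Finsupp.weight_apply, Finsupp.sum_fintype, Fin.sum_univ_three]

theorem Finsupp.ext_fin_three {d e : Fin 3 →₀ ℕ} (h₀ : d 0 = e 0) (h₁ : d 1 = e 1)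
    (h₂ : d 2 = e 2) : d = e := by
  ext i
  fin_cases i <;> assumption

theorem span_eq_span_monomial_five_six_nineteen :
    (Ideal.span {X 1 ^ 5, X 0 * X 2, X 1 * X 2, X 2 ^ 2} : Ideal (MvPolynomial (Fin 3) k)) =
      Ideal.span ((fun s => monomial s 1) '' ↑({Finsupp.single 1 5,
        Finsupp.single 0 1 + Finsupp.single 2 1, Finsupp.single 1 1 + Finsupp.single 2 1,
        Finsupp.single 2 2} : Finset (Fin 3 →₀ ℕ))) := by
  simp only [Finset.coe_insert, Finset.coe_singleton, Set.image_insert_eq, Set.image_singleton,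
    X_pow_eq_monomial, X_mul_X_eq_monomial]

theorem eq_of_weight_five_six_nineteen {d e : Fin 3 →₀ ℕ}
    (hw : Finsupp.weight ![5, 6, 19] d = Finsupp.weight ![5, 6, 19] e)
    (hdeg : e.degree ≤ d.degree) (he₁ : e 1 < 5) (he₀₂ : 1 ≤ e 0 → e 2 = 0)
    (he₁₂ : 1 ≤ e 1 → e 2 = 0) (he₂ : e 2 ≤ 1) : d = e := by
  rw [Finsupp.weight_fin_three, Finsupp.weight_fin_three] at hw
  rw [Finsupp.degree_fin_three, Finsupp.degree_fin_three] at hdeg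
  have hd₂ : d 2 ≤ 1 := by omega
  refine Finsupp.ext_fin_three ?_ ?_ ?_ <;>
  interval_cases (e 2) <;> interval_cases (d 2) <;> omega

theorem star_toricIdeal_five_six_nineteen :
    star k (toricIdeal k ![5, 6, 19]) = Ideal.span {X 1 ^ 5, X 0 * X 2, X 1 * X 2, X 2 ^ 2} := by
  rw [span_eq_span_monomial_five_six_nineteen]
  refine star_toricIdeal_eq_span_monomial _ _ ?_ ?_
  · simp only [Finset.coe_insert, Finset.coe_singleton, Set.mem_insert_iff,
      Set.mem_singleton_iff, forall_eq_or_imp, forall_eq]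
    refine ⟨⟨Finsupp.single 0 6, ?_⟩, ⟨Finsupp.single 1 4, ?_⟩, ⟨Finsupp.single 0 5, ?_⟩,
      ⟨Finsupp.single 0 4 + Finsupp.single 1 3, ?_⟩⟩ <;>
    simp [Finsupp.weight_fin_three, Finsupp.degree_fin_three]
  · intro e he d hw hdeg
    obtain ⟨he₁, he₀₂, he₁₂, he₂⟩ :
        e 1 < 5 ∧ (1 ≤ e 0 → e 2 = 0) ∧ (1 ≤ e 1 → e 2 = 0) ∧ e 2 ≤ 1 := by
      simpa [Finsupp.le_def, Fin.forall_fin_succ, Finsupp.single_apply] using he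
    exact eq_of_weight_five_six_nineteen hw hdeg he₁ he₀₂ he₁₂ he₂

theorem mu_star_toricIdeal_five_six_nineteen : mu k (star k (toricIdeal k ![5, 6, 19])) = 4 := by
  rw [star_toricIdeal_five_six_nineteen, span_eq_span_monomial_five_six_nineteen,
    mu_span_monomial]
  · simp [Finsupp.ext_iff, Fin.forall_fin_succ]
  · simp [Finsupp.le_def, Fin.forall_fin_succ]

theorem span_eq_span_monomial_five_thirtyOne_ninetyNine :
    (Ideal.span {X 1 ^ 4, X 1 * X 2, X 2 ^ 2} : Ideal (MvPolynomial (Fin 3) k)) =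
      Ideal.span ((fun s => monomial s 1) '' ↑({Finsupp.single 1 4,
        Finsupp.single 1 1 + Finsupp.single 2 1, Finsupp.single 2 2} : Finset (Fin 3 →₀ ℕ))) := by
  simp only [Finset.coe_insert, Finset.coe_singleton, Set.image_insert_eq, Set.image_singleton,
    X_pow_eq_monomial, X_mul_X_eq_monomial]

theorem eq_of_weight_five_thirtyOne_ninetyNine {d e : Fin 3 →₀ ℕ}
    (hw : Finsupp.weight ![5, 31, 99] d = Finsupp.weight ![5, 31, 99] e)
    (hdeg : e.degree ≤ d.degree) (he₁ : e 1 < 4) (he₁₂ : 1 ≤ e 1 → e 2 = 0)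
    (he₂ : e 2 ≤ 1) : d = e := by
  rw [Finsupp.weight_fin_three, Finsupp.weight_fin_three] at hw
  rw [Finsupp.degree_fin_three, Finsupp.degree_fin_three] at hdeg
  have hd₂ : d 2 ≤ e 2 := by omega
  refine Finsupp.ext_fin_three ?_ ?_ ?_ <;>
  interval_cases (e 2) <;> interval_cases (d 2) <;> omega

theorem star_toricIdeal_five_thirtyOne_ninetyNine :
    star k (toricIdeal k ![5, 31, 99]) = Ideal.span {X 1 ^ 4, X 1 * X 2, X 2 ^ 2} := by
  rw [span_eq_span_monomial_five_thirtyOne_ninetyNine]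
  refine star_toricIdeal_eq_span_monomial _ _ ?_ ?_
  · simp only [Finset.coe_insert, Finset.coe_singleton, Set.mem_insert_iff,
      Set.mem_singleton_iff, forall_eq_or_imp, forall_eq]
    refine ⟨⟨Finsupp.single 0 5 + Finsupp.single 2 1, ?_⟩, ⟨Finsupp.single 0 26, ?_⟩,
      ⟨Finsupp.single 0 21 + Finsupp.single 1 3, ?_⟩⟩ <;>
    simp [Finsupp.weight_fin_three, Finsupp.degree_fin_three]
  · intro e he d hw hdeg
    obtain ⟨he₁, he₁₂, he₂⟩ : e 1 < 4 ∧ (1 ≤ e 1 → e 2 = 0) ∧ e 2 ≤ 1 := by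
      simpa [Finsupp.le_def, Fin.forall_fin_succ, Finsupp.single_apply] using he
    exact eq_of_weight_five_thirtyOne_ninetyNine hw hdeg he₁ he₁₂ he₂

theorem mu_star_toricIdeal_five_thirtyOne_ninetyNine :
    mu k (star k (toricIdeal k ![5, 31, 99])) = 3 := by
  rw [star_toricIdeal_five_thirtyOne_ninetyNine, span_eq_span_monomial_five_thirtyOne_ninetyNine,
    mu_span_monomial]
  · simp [Finsupp.ext_iff, Fin.forall_fin_succ]
  · simp [Finsupp.le_def, Fin.forall_fin_succ]

/-- **(Part of the Proposition in Section 5, via Example 5.3.)** The numerical semigroups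
`S = ⟨5,6,19⟩` and `S'' = ⟨5,31,99⟩` lie in the same face of the Kunz cone `C₅`, yet with
`Q' = k[y, x₁, x₄]` (variables `0 ↦ y, 1 ↦ x₁, 2 ↦ x₄`) the ideals of initial forms are
`I_S^* = (x₁⁵, y x₄, x₁ x₄, x₄²)` and `I_{S''}^* = (x₁⁴, x₁ x₄, x₄²)`; in particular
`μ(I_S^*) = 4` while `μ(I_{S''}^*) = 3`, so `β₁^{Q'}(gr_𝔪 k[S]) ≠ β₁^{Q'}(gr_𝔪 k[S''])`. -/
theorem initial_ideals_differ_on_same_face :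
    SameFace (AddSubmonoid.closure {5, 6, 19}) (AddSubmonoid.closure {5, 31, 99}) 5 ∧
    star k (toricIdeal k ![5, 6, 19]) =
      Ideal.span {X 1 ^ 5, X 0 * X 2, X 1 * X 2, X 2 ^ 2} ∧
    star k (toricIdeal k ![5, 31, 99]) =
      Ideal.span {X 1 ^ 4, X 1 * X 2, X 2 ^ 2} ∧
    mu k (star k (toricIdeal k ![5, 6, 19])) = 4 ∧
    mu k (star k (toricIdeal k ![5, 31, 99])) = 3 :=
  ⟨sameFace_closure_five_six_nineteen_five_thirtyOne_ninetyNine,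
    star_toricIdeal_five_six_nineteen k, star_toricIdeal_five_thirtyOne_ninetyNine k,
    mu_star_toricIdeal_five_six_nineteen k, mu_star_toricIdeal_five_thirtyOne_ninetyNine k⟩
end
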